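/- Let l⁰ be a positive integer and let w⁰ > w^∞ ≥ 1 be relatively prime positive integers, and let h(x) = x⁴ − 8l⁰(w⁰ + w^∞)·x³ + 2(l⁰)²(2(w⁰)² + 41w⁰w^∞ + 2(w^∞)²)·x² − 100(l⁰)³w⁰w^∞(w⁰ + w^∞)·x + (l⁰)⁴w⁰w^∞(32(w⁰)² + 61w⁰w^∞ + 32(w^∞)²). Then h(0) > 0, h(2l⁰w⁰) = −(l⁰)⁴w⁰(32(w⁰ − w^∞)³ + 27(w^∞)²(w⁰ − w^∞) + 27(w^∞)³) < 0, and h has exactly one real root in the open interval (0, 2l⁰w⁰) and exactly one real root in the open interval (2l⁰w⁰, +∞). -/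
import Mathlib

/-- The quartic `h(x)` from the proof of Proposition `numcscS`. -/
def H (l0 w0 winf : ℕ) (x : ℝ) : ℝ :=
  x^4 - 8*(l0:ℝ)*((w0:ℝ)+(winf:ℝ))*x^3
    + 2*(l0:ℝ)^2*(2*(w0:ℝ)^2 + 41*(w0:ℝ)*(winf:ℝ) + 2*(winf:ℝ)^2)*x^2
    - 100*(l0:ℝ)^3*(w0:ℝ)*(winf:ℝ)*((w0:ℝ)+(winf:ℝ))*x
    + (l0:ℝ)^4*(w0:ℝ)*(winf:ℝ)*(32*(w0:ℝ)^2 + 61*(w0:ℝ)*(winf:ℝ) + 32*(winf:ℝ)^2)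

set_option maxHeartbeats 1000000 in
lemma disc_tele (a b c d E1 E2 E3 E4 : ℝ)
    (h1 : a+b+c+d = E1)
    (h2 : a*b+a*c+a*d+b*c+b*d+c*d = E2)
    (h3 : a*b*c+a*b*d+a*c*d+b*c*d = E3)
    (h4 : a*b*c*d = E4) :
    ((a-b)*(a-c)*(a-d)*(b-c)*(b-d)*(c-d))^2
      = 256*E4^3 - 192*E1*E3*E4^2 - 128*E2^2*E4^2 + 144*E2*E3^2*E4 - 27*E3^4
        + 144*E1^2*E2*E4^2 - 6*E1^2*E3^2*E4 - 80*E1*E2^2*E3*E4 + 18*E1*E2*E3^3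
        + 16*E2^4*E4 - 4*E2^3*E3^2 - 27*E1^4*E4^2 + 18*E1^3*E2*E3*E4
        - 4*E1^3*E3^3 - 4*E1^2*E2^3*E4 + E1^2*E2^2*E3^2 := by
  rw [← h1, ← h2, ← h3, ← h4]; ring

set_option maxHeartbeats 2000000 in
/-- The quartic `h` cannot have four real roots (its discriminant is negative). -/
lemma no_four_roots (L W V a b c d : ℝ) (hL : 0 < L) (hV : 1 ≤ V) (hW : V + 1 ≤ W)
    (h1 : a+b+c+d = 8*L*(W+V))
    (h2 : a*b+a*c+a*d+b*c+b*d+c*d = 2*L^2*(2*W^2+41*W*V+2*V^2))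
    (h3 : a*b*c+a*b*d+a*c*d+b*c*d = 100*L^3*W*V*(W+V))
    (h4 : a*b*c*d = L^4*W*V*(32*W^2+61*W*V+32*V^2)) : False := by
  have key := disc_tele a b c d _ _ _ _ h1 h2 h3 h4
  have key2 : (256*(L^4*W*V*(32*W^2+61*W*V+32*V^2))^3
      - 192*(8*L*(W+V))*(100*L^3*W*V*(W+V))*(L^4*W*V*(32*W^2+61*W*V+32*V^2))^2
      - 128*(2*L^2*(2*W^2+41*W*V+2*V^2))^2*(L^4*W*V*(32*W^2+61*W*V+32*V^2))^2
      + 144*(2*L^2*(2*W^2+41*W*V+2*V^2))*(100*L^3*W*V*(W+V))^2*(L^4*W*V*(32*W^2+61*W*V+32*V^2))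
      - 27*(100*L^3*W*V*(W+V))^4
      + 144*(8*L*(W+V))^2*(2*L^2*(2*W^2+41*W*V+2*V^2))*(L^4*W*V*(32*W^2+61*W*V+32*V^2))^2
      - 6*(8*L*(W+V))^2*(100*L^3*W*V*(W+V))^2*(L^4*W*V*(32*W^2+61*W*V+32*V^2))
      - 80*(8*L*(W+V))*(2*L^2*(2*W^2+41*W*V+2*V^2))^2*(100*L^3*W*V*(W+V))*(L^4*W*V*(32*W^2+61*W*V+32*V^2))
      + 18*(8*L*(W+V))*(2*L^2*(2*W^2+41*W*V+2*V^2))*(100*L^3*W*V*(W+V))^3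
      + 16*(2*L^2*(2*W^2+41*W*V+2*V^2))^4*(L^4*W*V*(32*W^2+61*W*V+32*V^2))
      - 4*(2*L^2*(2*W^2+41*W*V+2*V^2))^3*(100*L^3*W*V*(W+V))^2
      - 27*(8*L*(W+V))^4*(L^4*W*V*(32*W^2+61*W*V+32*V^2))^2
      + 18*(8*L*(W+V))^3*(2*L^2*(2*W^2+41*W*V+2*V^2))*(100*L^3*W*V*(W+V))*(L^4*W*V*(32*W^2+61*W*V+32*V^2))
      - 4*(8*L*(W+V))^3*(100*L^3*W*V*(W+V))^3
      - 4*(8*L*(W+V))^2*(2*L^2*(2*W^2+41*W*V+2*V^2))^3*(L^4*W*V*(32*W^2+61*W*V+32*V^2))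
      + (8*L*(W+V))^2*(2*L^2*(2*W^2+41*W*V+2*V^2))^2*(100*L^3*W*V*(W+V))^2)
      = -(L^12*W*V*(W-V)^4*(393216*(W^6+V^6)+9584640*(W*V)*(W^4+V^4)
          +79054848*(W*V)^2*(W^2+V^2)+230081280*(W*V)^3)) := by ring
  rw [key2] at key
  have hV0 : 0 < V := lt_of_lt_of_le one_pos hV
  have hW0 : 0 < W := by linarith
  have hWV : 0 < W - V := by linarith
  have hpos : 0 < L^12*W*V*(W-V)^4*(393216*(W^6+V^6)+9584640*(W*V)*(W^4+V^4)
      +79054848*(W*V)^2*(W^2+V^2)+230081280*(W*V)^3) := by positivity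
  linarith [sq_nonneg ((a-b)*(a-c)*(a-d)*(b-c)*(b-d)*(c-d)), key, hpos]

lemma quad_zero (p q r x1 x2 x3 : ℝ) (h12 : x1 ≠ x2) (h13 : x1 ≠ x3) (h23 : x2 ≠ x3)
    (A1 : p*x1^2 + q*x1 + r = 0) (A2 : p*x2^2 + q*x2 + r = 0)
    (A3 : p*x3^2 + q*x3 + r = 0) : p = 0 ∧ q = 0 ∧ r = 0 := by
  have B12 : (x1 - x2) * (p*(x1+x2) + q) = 0 := by linear_combination A1 - A2
  have B23 : (x2 - x3) * (p*(x2+x3) + q) = 0 := by linear_combination A2 - A3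
  have C12 : p*(x1+x2) + q = 0 :=
    (mul_eq_zero.1 B12).resolve_left (sub_ne_zero.2 h12)
  have C23 : p*(x2+x3) + q = 0 :=
    (mul_eq_zero.1 B23).resolve_left (sub_ne_zero.2 h23)
  have D13 : (x1 - x3) * p = 0 := by linear_combination C12 - C23
  have hp : p = 0 := (mul_eq_zero.1 D13).resolve_left (sub_ne_zero.2 h13)
  have hq : q = 0 := by linear_combination C12 - (x1+x2)*hp
  have hr : r = 0 := by linear_combination A1 - x1^2*hp - x1*hq
  exact ⟨hp, hq, hr⟩

/-- The quartic `h` cannot have three distinct real roots. -/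
lemma no_three_roots (L W V x1 x2 x3 : ℝ) (hL : 0 < L) (hV : 1 ≤ V) (hW : V + 1 ≤ W)
    (h12 : x1 ≠ x2) (h13 : x1 ≠ x3) (h23 : x2 ≠ x3)
    (hz1 : x1^4 - 8*L*(W+V)*x1^3 + 2*L^2*(2*W^2 + 41*W*V + 2*V^2)*x1^2
      - 100*L^3*W*V*(W+V)*x1 + L^4*W*V*(32*W^2 + 61*W*V + 32*V^2) = 0)
    (hz2 : x2^4 - 8*L*(W+V)*x2^3 + 2*L^2*(2*W^2 + 41*W*V + 2*V^2)*x2^2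
      - 100*L^3*W*V*(W+V)*x2 + L^4*W*V*(32*W^2 + 61*W*V + 32*V^2) = 0)
    (hz3 : x3^4 - 8*L*(W+V)*x3^3 + 2*L^2*(2*W^2 + 41*W*V + 2*V^2)*x3^2
      - 100*L^3*W*V*(W+V)*x3 + L^4*W*V*(32*W^2 + 61*W*V + 32*V^2) = 0) : False := by
  set x4 : ℝ := 8*L*(W+V) - x1 - x2 - x3 with hx4
  obtain ⟨hp, hq, hr⟩ := quad_zero
    (2*L^2*(2*W^2+41*W*V+2*V^2) - (x1*x2+x1*x3+x1*x4+x2*x3+x2*x4+x3*x4))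
    ((x1*x2*x3+x1*x2*x4+x1*x3*x4+x2*x3*x4) - 100*L^3*W*V*(W+V))
    (L^4*W*V*(32*W^2+61*W*V+32*V^2) - x1*x2*x3*x4)
    x1 x2 x3 h12 h13 h23
    (by rw [hx4]; linear_combination hz1)
    (by rw [hx4]; linear_combination hz2)
    (by rw [hx4]; linear_combination hz3)
  exact no_four_roots L W V x1 x2 x3 x4 hL hV hW
    (by rw [hx4]; ring)
    (by linear_combination -hp)
    (by linear_combination hq)
    (by linear_combination -hr)


lemma main_real (L W V : ℝ) (hL : 1 ≤ L) (hV : 1 ≤ V) (hWV : V + 1 ≤ W) :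
    0 < (0:ℝ)^4 - 8*L*(W+V)*(0:ℝ)^3 + 2*L^2*(2*W^2 + 41*W*V + 2*V^2)*(0:ℝ)^2
      - 100*L^3*W*V*(W+V)*(0:ℝ) + L^4*W*V*(32*W^2 + 61*W*V + 32*V^2) ∧
    (2*L*W)^4 - 8*L*(W+V)*(2*L*W)^3 + 2*L^2*(2*W^2 + 41*W*V + 2*V^2)*(2*L*W)^2
      - 100*L^3*W*V*(W+V)*(2*L*W) + L^4*W*V*(32*W^2 + 61*W*V + 32*V^2)
      = -L^4*W*(32*(W-V)^3 + 27*V^2*(W-V) + 27*V^3) ∧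
    (2*L*W)^4 - 8*L*(W+V)*(2*L*W)^3 + 2*L^2*(2*W^2 + 41*W*V + 2*V^2)*(2*L*W)^2
      - 100*L^3*W*V*(W+V)*(2*L*W) + L^4*W*V*(32*W^2 + 61*W*V + 32*V^2) < 0 ∧
    {x : ℝ | 0 < x ∧ x < 2*L*W ∧ x^4 - 8*L*(W+V)*x^3
      + 2*L^2*(2*W^2 + 41*W*V + 2*V^2)*x^2 - 100*L^3*W*V*(W+V)*x
      + L^4*W*V*(32*W^2 + 61*W*V + 32*V^2) = 0}.encard = 1 ∧
    {x : ℝ | 2*L*W < x ∧ x^4 - 8*L*(W+V)*x^3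
      + 2*L^2*(2*W^2 + 41*W*V + 2*V^2)*x^2 - 100*L^3*W*V*(W+V)*x
      + L^4*W*V*(32*W^2 + 61*W*V + 32*V^2) = 0}.encard = 1 := by
  have hL0 : (0:ℝ) < L := by linarith
  have hV0 : (0:ℝ) < V := by linarith
  have hW0 : (0:ℝ) < W := by linarith
  have hwv0 : (0:ℝ) < W - V := by linarith
  set f : ℝ → ℝ := fun x => x^4 - 8*L*(W+V)*x^3
      + 2*L^2*(2*W^2 + 41*W*V + 2*V^2)*x^2 - 100*L^3*W*V*(W+V)*x
      + L^4*W*V*(32*W^2 + 61*W*V + 32*V^2) with hf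
  show 0 < f 0 ∧ f (2*L*W) = _ ∧ f (2*L*W) < 0 ∧
    {x : ℝ | 0 < x ∧ x < 2*L*W ∧ f x = 0}.encard = 1 ∧
    {x : ℝ | 2*L*W < x ∧ f x = 0}.encard = 1
  have hfx : ∀ x : ℝ, f x = x^4 - 8*L*(W+V)*x^3
      + 2*L^2*(2*W^2 + 41*W*V + 2*V^2)*x^2 - 100*L^3*W*V*(W+V)*x
      + L^4*W*V*(32*W^2 + 61*W*V + 32*V^2) := fun x => rfl
  have part1 : 0 < f 0 := by
    rw [hfx 0]
    have : (0:ℝ)^4 - 8*L*(W+V)*(0:ℝ)^3 + 2*L^2*(2*W^2 + 41*W*V + 2*V^2)*(0:ℝ)^2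
      - 100*L^3*W*V*(W+V)*(0:ℝ) + L^4*W*V*(32*W^2 + 61*W*V + 32*V^2)
      = L^4*W*V*(32*W^2 + 61*W*V + 32*V^2) := by ring
    rw [this]; positivity
  have part2 : f (2*L*W) = -L^4*W*(32*(W-V)^3 + 27*V^2*(W-V) + 27*V^3) := by
    rw [hfx]; ring
  have part3 : f (2*L*W) < 0 := by
    rw [part2]
    have h1 : 0 < 32*(W-V)^3 + 27*V^2*(W-V) + 27*V^3 := by
      nlinarith [mul_pos (mul_pos hwv0 hwv0) hwv0, mul_pos (mul_pos hV0 hV0) hwv0,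
        mul_pos (mul_pos hV0 hV0) hV0]
    nlinarith [mul_pos (mul_pos (pow_pos hL0 4) hW0) h1]
  have hcont : Continuous f := by
    rw [hf]; fun_prop
  have h2LW : (0:ℝ) < 2*L*W := by positivity
  have hroot1 : ∃ x, x ∈ Set.Ioo (0:ℝ) (2*L*W) ∧ f x = 0 := by
    have hiv := intermediate_value_Ioo' (le_of_lt h2LW) hcont.continuousOn
    obtain ⟨x, hx, hfxv⟩ := hiv (Set.mem_Ioo.2 ⟨part3, part1⟩)
    exact ⟨x, hx, hfxv⟩
  obtain ⟨M, hMdef⟩ : ∃ M:ℝ, M = 8*L*(W+V) + 100*L^3*W*V*(W+V) := ⟨_, rfl⟩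
  have htpos : (0:ℝ) < 100*L^3*W*V*(W+V) := by positivity
  have hS : (3:ℝ) ≤ W + V := by linarith
  have hLS : (1:ℝ)*3 ≤ L*(W+V) := mul_le_mul hL hS (by norm_num) (by linarith)
  have hM1 : 1 ≤ M := by rw [hMdef]; nlinarith
  have hMgt : 2*L*W < M := by
    rw [hMdef]
    nlinarith [mul_pos hL0 hW0, mul_pos hL0 hV0]
  have hM0 : (0:ℝ) < M := by linarith
  have hHM : 0 < f M := by
    have eM : f M = (100*L^3*W*V*(W+V))*M*(M^2-1) + 2*L^2*(2*W^2+41*W*V+2*V^2)*M^2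
        + L^4*W*V*(32*W^2 + 61*W*V + 32*V^2) := by
      rw [hfx, hMdef]; ring
    rw [eM]
    have hMsq : (0:ℝ) ≤ M^2 - 1 := by nlinarith
    have t1 : 0 ≤ (100*L^3*W*V*(W+V))*M*(M^2-1) := by positivity
    have t2 : 0 < 2*L^2*(2*W^2+41*W*V+2*V^2)*M^2 := by positivity
    have t3 : 0 < L^4*W*V*(32*W^2 + 61*W*V + 32*V^2) := by positivity
    linarith
  have hroot2 : ∃ x, x ∈ Set.Ioo (2*L*W) M ∧ f x = 0 := by
    have hiv := intermediate_value_Ioo (le_of_lt hMgt) hcont.continuousOn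
    obtain ⟨x, hx, hfxv⟩ := hiv (Set.mem_Ioo.2 ⟨part3, hHM⟩)
    exact ⟨x, hx, hfxv⟩
  obtain ⟨xa, ⟨hxa1, hxa2⟩, hxa0⟩ := hroot1
  obtain ⟨xb, ⟨hxb1, _⟩, hxb0⟩ := hroot2
  have hab : xa ≠ xb := ne_of_lt (lt_trans hxa2 hxb1)
  have no3 : ∀ y1 y2 y3 : ℝ, y1 ≠ y2 → y1 ≠ y3 → y2 ≠ y3 →
      f y1 = 0 → f y2 = 0 → f y3 = 0 → False := by
    intro y1 y2 y3 e12 e13 e23 hz1 hz2 hz3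
    rw [hfx] at hz1 hz2 hz3
    exact no_three_roots L W V y1 y2 y3 hL0 hV hWV e12 e13 e23 hz1 hz2 hz3
  refine ⟨part1, part2, part3, ?_, ?_⟩
  · rw [Set.encard_eq_one]
    refine ⟨xa, Set.eq_singleton_iff_unique_mem.2 ⟨⟨hxa1, hxa2, hxa0⟩, ?_⟩⟩
    rintro y ⟨hy1, hy2, hy0⟩
    by_contra hne
    exact no3 y xa xb hne (ne_of_lt (lt_trans hy2 hxb1)) hab hy0 hxa0 hxb0
  · rw [Set.encard_eq_one]
    refine ⟨xb, Set.eq_singleton_iff_unique_mem.2 ⟨⟨hxb1, hxb0⟩, ?_⟩⟩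
    rintro y ⟨hy1, hy0⟩
    by_contra hne
    exact no3 xa y xb (ne_of_lt (lt_trans hxa2 hy1)) hab hne hxa0 hy0 hxb0

/-- Sign values of `h` and location of its two real roots: one in `(0, 2l⁰w⁰)`
and one in `(2l⁰w⁰, ∞)`. -/
theorem stmt_7 (l0 w0 winf : ℕ) (hl0 : 0 < l0)
    (hwinf : 1 ≤ winf) (hw : winf < w0) (hcop : Nat.Coprime w0 winf) :
    0 < H l0 w0 winf 0 ∧
    H l0 w0 winf (2*(l0:ℝ)*(w0:ℝ))
      = -(l0:ℝ)^4*(w0:ℝ)*(32*((w0:ℝ)-(winf:ℝ))^3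
          + 27*(winf:ℝ)^2*((w0:ℝ)-(winf:ℝ)) + 27*(winf:ℝ)^3) ∧
    H l0 w0 winf (2*(l0:ℝ)*(w0:ℝ)) < 0 ∧
    {x : ℝ | 0 < x ∧ x < 2*(l0:ℝ)*(w0:ℝ) ∧ H l0 w0 winf x = 0}.encard = 1 ∧
    {x : ℝ | 2*(l0:ℝ)*(w0:ℝ) < x ∧ H l0 w0 winf x = 0}.encard = 1 := by
  have hL : (1:ℝ) ≤ (l0:ℝ) := by exact_mod_cast hl0
  have hV : (1:ℝ) ≤ (winf:ℝ) := by exact_mod_cast hwinf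
  have hWV : (winf:ℝ) + 1 ≤ (w0:ℝ) := by
    have : ((winf+1 : ℕ) : ℝ) ≤ ((w0:ℕ):ℝ) := by exact_mod_cast Nat.succ_le_of_lt hw
    push_cast at this; linarith
  exact main_real (l0:ℝ) (w0:ℝ) (winf:ℝ) hL hV hWV
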